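/- Let α > 2 and c ≥ 0 be real numbers, and for T > 0 set β(T) = 1 + ρ(T, α) where ρ(T, α) := T^{2/α} · ∫_{T^{−2/α}}^∞ (1 + u^{α/2})^{−1} du. Then the average data rate of a typical user in the interference-limited regime, E[R] = ∫_0^∞ 1/( β(e^t − 1) + (β(e^t − 1) − 1)·c ) dt, is finite. -/

import Mathlib

/-!
Write `s = 2/α ∈ (0, 1)` and `T = e^t - 1`, so that the denominator is
`1 + (1 + c) ρ(T) ≥ 1 + ρ(T)`. Since `p = α/2 > 1`, the integrand `(1 + u^p)⁻¹` is integrable on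
`(0, ∞)`, so the tail integral `a ↦ ∫_a^∞ (1 + u^p)⁻¹` is antitone and finite there. For `T ≥ 1`
the lower limit `T^{-s}` is at most `1`, hence `ρ(T) ≥ ρ(1) T^s` with `ρ(1) > 0`. Together with
`ρ ≥ 0` this gives `1 + ρ(T) ≳ (1 + T)^s = e^{st}`, so the integrand is dominated by a multiple
of `e^{-st}`.
-/

open Real MeasureTheory Set

theorem measurable_setIntegral_Ioi {g : ℝ → ℝ} (hg : Measurable g) :
    Measurable fun a => ∫ u in Ioi a, g u := by
  have hjoint : StronglyMeasurable fun p : ℝ × ℝ =>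
      {q : ℝ × ℝ | q.1 < q.2}.indicator (g ∘ Prod.snd) p :=
    ((hg.comp measurable_snd).indicator
      (measurableSet_lt measurable_fst measurable_snd)).stronglyMeasurable
  convert hjoint.integral_prod_right' (ν := volume).measurable using 2 with a
  rw [← integral_indicator measurableSet_Ioi]
  rfl

theorem inv_one_add_rpow_pos {p u : ℝ} (hu : 0 ≤ u) : 0 < (1 + u ^ p)⁻¹ := by
  have := rpow_nonneg hu p
  positivity

theorem integrableOn_Ioi_inv_one_add_rpow {p : ℝ} (hp : 1 < p) :
    IntegrableOn (fun u : ℝ => (1 + u ^ p)⁻¹) (Ioi 0) := by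
  have hmeas : AEStronglyMeasurable (fun u : ℝ => (1 + u ^ p)⁻¹) := by fun_prop
  have hnear : IntegrableOn (fun u : ℝ => (1 + u ^ p)⁻¹) (Ioc 0 1) := by
    refine (integrableOn_const (C := (1:ℝ)) measure_Ioc_lt_top.ne).mono' hmeas.restrict ?_
    filter_upwards [ae_restrict_mem measurableSet_Ioc] with u hu
    have := rpow_nonneg hu.1.le p
    rw [norm_inv, Real.norm_of_nonneg (by positivity)]
    exact inv_le_one_of_one_le₀ (by linarith)
  have hfar : IntegrableOn (fun u : ℝ => (1 + u ^ p)⁻¹) (Ioi 1) := by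
    refine (integrableOn_Ioi_rpow_of_lt (by linarith : -p < -1) one_pos).mono' hmeas.restrict ?_
    filter_upwards [ae_restrict_mem measurableSet_Ioi] with u hu
    have hu0 : 0 < u := one_pos.trans hu
    have := rpow_pos_of_pos hu0 p
    rw [norm_inv, Real.norm_of_nonneg (by positivity), rpow_neg hu0.le]
    exact inv_anti₀ this (by linarith)
  rw [← Ioc_union_Ioi_eq_Ioi zero_le_one]
  exact hnear.union hfar

/-- The paper's `ρ(T, α)`. The `ρ` and `β` of the theorem are only pinned down for `T > 0`, so
the integrand is first replaced by the one built from this explicit, measurable `rho`. -/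
noncomputable def rho (α T : ℝ) : ℝ :=
  T ^ (2 / α) * ∫ u in Ioi (T ^ (-(2 / α))), (1 + u ^ (α / 2))⁻¹

theorem measurable_rho (α : ℝ) : Measurable (rho α) := by
  have : Measurable fun u : ℝ => (1 + u ^ (α / 2))⁻¹ := by fun_prop
  unfold rho
  exact (measurable_id.pow_const _).mul ((measurable_setIntegral_Ioi this).comp (by fun_prop))

theorem rho_nonneg {α T : ℝ} (hT : 0 ≤ T) : 0 ≤ rho α T :=
  mul_nonneg (rpow_nonneg hT _) (setIntegral_nonneg measurableSet_Ioi fun _ hu =>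
    (inv_one_add_rpow_pos ((rpow_nonneg hT _).trans (le_of_lt hu))).le)

theorem rho_one_pos {α : ℝ} (hα : 2 < α) : 0 < rho α 1 := by
  rw [rho, one_rpow, one_rpow, one_mul, setIntegral_pos_iff_support_of_nonneg_ae
    (ae_restrict_of_forall_mem measurableSet_Ioi fun u hu =>
      (inv_one_add_rpow_pos (zero_le_one.trans (le_of_lt hu))).le)
    ((integrableOn_Ioi_inv_one_add_rpow (by linarith)).mono_set (Ioi_subset_Ioi zero_le_one))]
  refine lt_of_lt_of_le (by simp) (measure_mono (s := Ioi (1 : ℝ)) fun u hu => ⟨?_, hu⟩)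
  exact (inv_one_add_rpow_pos (zero_le_one.trans (le_of_lt hu))).ne'

theorem rho_one_mul_rpow_le_rho {α T : ℝ} (hα : 2 < α) (hT : 1 ≤ T) :
    rho α 1 * T ^ (2 / α) ≤ rho α T := by
  have hs : 0 ≤ 2 / α := by positivity
  rw [mul_comm, rho, rho, one_rpow, one_rpow, one_mul]
  refine mul_le_mul_of_nonneg_left (setIntegral_mono_set
    ((integrableOn_Ioi_inv_one_add_rpow (by linarith)).mono_set (Ioi_subset_Ioi ?_))
    (ae_restrict_of_forall_mem measurableSet_Ioi fun u hu =>
      (inv_one_add_rpow_pos ((rpow_nonneg (by linarith) _).trans (le_of_lt hu))).le)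
    (Ioi_subset_Ioi ?_).eventuallyLE) (rpow_nonneg (by linarith) _)
  · exact rpow_nonneg (by linarith) _
  · exact rpow_le_one_of_one_le_of_nonpos hT (neg_nonpos.2 hs)

theorem min_mul_one_add_rpow_le {K s T x : ℝ} (hK : 0 ≤ K) (hs : 0 ≤ s) (hT : 0 ≤ T)
    (hx : 0 ≤ x) (hKx : 1 ≤ T → K * T ^ s ≤ x) :
    min K 1 * (1 + T) ^ s ≤ 2 ^ s * (1 + x) := by
  rcases le_total T 1 with hT1 | hT1
  · calc min K 1 * (1 + T) ^ s ≤ 1 * 2 ^ s :=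
          mul_le_mul (min_le_right _ _) (rpow_le_rpow (by positivity) (by linarith) hs)
            (by positivity) zero_le_one
      _ ≤ 2 ^ s * (1 + x) := by
          rw [one_mul]; exact le_mul_of_one_le_right (by positivity) (by linarith)
  · calc min K 1 * (1 + T) ^ s ≤ K * (2 * T) ^ s :=
          mul_le_mul (min_le_left _ _) (rpow_le_rpow (by positivity) (by linarith) hs)
            (by positivity) hK
      _ = 2 ^ s * (K * T ^ s) := by rw [mul_rpow zero_le_two hT]; ring
      _ ≤ 2 ^ s * (1 + x) := by
          gcongr; linarith [hKx hT1]

theorem integrableOn_one_div_one_add_mul_rho {α c : ℝ} (hα : 2 < α) (hc : 0 ≤ c) :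
    IntegrableOn (fun t => 1 / (1 + (1 + c) * rho α (exp t - 1))) (Ioi 0) := by
  set κ := min (rho α 1) 1
  have hκ : 0 < κ := lt_min (rho_one_pos hα) one_pos
  have hs : 0 < 2 / α := by positivity
  refine ((exp_neg_integrableOn_Ioi 0 hs).const_mul (2 ^ (2 / α) / κ)).mono'
    (by have := measurable_rho α; fun_prop : Measurable _).aestronglyMeasurable ?_
  filter_upwards [ae_restrict_mem measurableSet_Ioi] with t ht
  have hT : 0 ≤ exp t - 1 := sub_nonneg.2 (one_le_exp (le_of_lt ht))
  have hρ := rho_nonneg (α := α) hT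
  have hbound := min_mul_one_add_rpow_le (rho_one_pos hα).le hs.le hT hρ
    (rho_one_mul_rpow_le_rho hα)
  rw [add_sub_cancel, ← exp_mul] at hbound
  calc ‖1 / (1 + (1 + c) * rho α (exp t - 1))‖ ≤ 1 / (1 + rho α (exp t - 1)) := by
        rw [norm_of_nonneg (by positivity)]
        gcongr
        nlinarith
    _ ≤ 2 ^ (2 / α) / (κ * exp (t * (2 / α))) := by
        rw [div_le_div_iff₀ (by positivity) (by positivity)]
        linarith
    _ = 2 ^ (2 / α) / κ * exp (-(2 / α) * t) := by
        rw [show -(2 / α) * t = -(t * (2 / α)) by ring, exp_neg, div_mul_eq_div_div,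
          div_eq_mul_inv (_ / κ)]

/-- For `α > 2`, `c ≥ 0`, with `β(T) = 1 + ρ(T,α)` where
`ρ(T,α) = T^{2/α} ∫_{T^{−2/α}}^∞ (1+u^{α/2})⁻¹ du`, the average rate
`E[R] = ∫_0^∞ 1/(β(e^t − 1) + (β(e^t − 1) − 1)·c) dt` is finite, i.e., the
integrand is integrable on `(0, ∞)`. -/
theorem average_rate_finite
    (α c : ℝ) (hα : 2 < α) (hc : 0 ≤ c)
    (ρ : ℝ → ℝ)
    (hρ : ∀ T > 0, ρ T = T ^ (2 / α) * ∫ u in Ioi (T ^ (-(2 / α))), (1 + u ^ (α / 2))⁻¹)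
    (β : ℝ → ℝ) (hβ : ∀ T > 0, β T = 1 + ρ T) :
    IntegrableOn
      (fun t : ℝ => 1 / (β (Real.exp t - 1) + (β (Real.exp t - 1) - 1) * c))
      (Ioi 0) := by
  refine (integrableOn_one_div_one_add_mul_rho hα hc).congr_fun (fun t (ht : 0 < t) => ?_)
    measurableSet_Ioi
  have hT : 0 < exp t - 1 := sub_pos.2 (one_lt_exp_iff.2 ht)
  simp only [hβ _ hT, hρ _ hT, rho]
  ring
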